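/- arXiv:2202.03060 — 4 statements merged into one kernel-verified Lean document; each statement's English description precedes it below -/
import Mathlib

section
/- For every controlled Markov process and every (possibly non-Markovian, possibly randomized) policy π, there exists a Markovian policy π' = (π'_t)_{t≥0} such that the t-step state distributions coincide: d_t^{π'}(s) = d_t^π(s) for every t ≥ 0 and every state s. (The policy π' can be taken to be π'_t(a|s) = d_t^π(s,a)/d_t^π(s), where d_t^π(s,a) is the t-step state-action distribution of π.) -/
open scoped BigOperators

/-- A controlled Markov process over finite state space `S` and action space `A`:
a transition kernel `P` and an initial distribution `μ`. -/
structure CMP (S A : Type) [Fintype S] [Fintype A] where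
  P : S → A → S → ℝ
  P_nonneg : ∀ s a s', 0 ≤ P s a s'
  P_sum_one : ∀ s a, ∑ s', P s a s' = 1
  μ : S → ℝ
  μ_nonneg : ∀ s, 0 ≤ μ s
  μ_sum_one : ∑ s, μ s = 1

/-- A history of `t` steps: states `s_0, …, s_t` and actions `a_0, …, a_{t-1}`. -/
abbrev Hist (S A : Type) (t : ℕ) : Type := (Fin (t + 1) → S) × (Fin t → A)

/-- A continuation of `k` further steps: actions `a_0, …, a_{k-1}` together with the
states those actions lead to. -/
abbrev Contin (S A : Type) (k : ℕ) : Type := (Fin k → A) × (Fin k → S)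

/-- A general (possibly non-Markovian, possibly randomized) policy: for every time `t`
and history of length `t`, a probability distribution over actions. -/
structure Policy (S A : Type) [Fintype A] where
  p : ∀ t : ℕ, Hist S A t → A → ℝ
  nonneg : ∀ t h a, 0 ≤ p t h a
  sum_one : ∀ t h, ∑ a, p t h a = 1

/-- A Markovian (randomized, time-dependent) policy: for every time `t` and current
state `s`, a probability distribution over actions. -/
structure MPolicy (S A : Type) [Fintype A] where
  p : ℕ → S → A → ℝ
  nonneg : ∀ t s a, 0 ≤ p t s a
  sum_one : ∀ t s, ∑ a, p t s a = 1

/-- The last (current) state of a history. -/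
def lastState {S A : Type} {t : ℕ} (h : Hist S A t) : S := h.1 (Fin.last t)

/-- A Markovian policy viewed as a general policy. -/
def MPolicy.toPolicy {S A : Type} [Fintype A] (m : MPolicy S A) : Policy S A where
  p := fun t h a => m.p t (lastState h) a
  nonneg := fun t h a => m.nonneg t _ a
  sum_one := fun t h => m.sum_one t _

/-- The general policy induced by a deterministic non-Markovian policy
(a function from histories to actions). -/
def detPolicy {S A : Type} [Fintype A] [DecidableEq A] (f : ∀ t : ℕ, Hist S A t → A) :
    Policy S A where
  p := fun t h a => if a = f t h then 1 else 0
  nonneg := by intro t h a; (try dsimp only); split <;> norm_num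
  sum_one := by intro t h; simp

/-- The length-`i` prefix of a history. -/
def histTake {S A : Type} {t : ℕ} (h : Hist S A t) (i : ℕ) (hi : i ≤ t) : Hist S A i :=
  (fun j => h.1 ⟨(j : ℕ), by have := j.isLt; omega⟩,
   fun j => h.2 ⟨(j : ℕ), by have := j.isLt; omega⟩)

/-- The probability that policy `π` generates the history `h` when interacting with
the CMP `M` (initial state from `μ`, actions from `π`, transitions from `P`). -/
noncomputable def histProb {S A : Type} [Fintype S] [Fintype A]
    (M : CMP S A) (π : Policy S A) {t : ℕ} (h : Hist S A t) : ℝ :=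
  M.μ (h.1 0) * ∏ i : Fin t,
    (π.p i (histTake h i (Nat.le_of_lt i.isLt)) (h.2 i) *
      M.P (h.1 i.castSucc) (h.2 i) (h.1 i.succ))

/-- The `t`-step state distribution `d_t^π(s) = Pr(s_t = s)`. -/
noncomputable def stateDist {S A : Type} [Fintype S] [Fintype A] [DecidableEq S]
    (M : CMP S A) (π : Policy S A) (t : ℕ) (s : S) : ℝ :=
  ∑ h : Hist S A t, if lastState h = s then histProb M π h else 0

/-- Shannon entropy of a distribution on a finite set (`0 log 0 = 0` since `Real.log 0 = 0`). -/
noncomputable def entropy {S : Type} [Fintype S] (d : S → ℝ) : ℝ :=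
  -∑ s, d s * Real.log (d s)

/-- The state visitation frequency of a trajectory with `n+1` states. -/
noncomputable def visitFreq {S A : Type} [Fintype S] [DecidableEq S] {n : ℕ}
    (h : Hist S A n) (s : S) : ℝ :=
  (∑ i : Fin (n + 1), if h.1 i = s then (1 : ℝ) else 0) / ((n : ℝ) + 1)

/-- The marginal state distribution `d_T^π(s) = (1/T) ∑_{t<T} d_t^π(s)`. -/
noncomputable def marginalDist {S A : Type} [Fintype S] [Fintype A] [DecidableEq S]
    (M : CMP S A) (π : Policy S A) (T : ℕ) (s : S) : ℝ :=
  (1 / (T : ℝ)) * ∑ t ∈ Finset.range T, stateDist M π t s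

/-- The `γ`-discounted state distribution `d_γ^π(s) = (1-γ) ∑_t γ^t d_t^π(s)`. -/
noncomputable def discountedDist {S A : Type} [Fintype S] [Fintype A] [DecidableEq S]
    (M : CMP S A) (π : Policy S A) (γ : ℝ) (s : S) : ℝ :=
  (1 - γ) * ∑' t : ℕ, γ ^ t * stateDist M π t s

/-- Concatenation of a length-`t` history with a `k`-step continuation. -/
def histAppend {S A : Type} {t k : ℕ} (h : Hist S A t) (c : Contin S A k) : Hist S A (t + k) :=
  (fun j => if hj : (j : ℕ) ≤ t then h.1 ⟨(j : ℕ), by omega⟩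
            else c.2 ⟨(j : ℕ) - t - 1, by have := j.isLt; omega⟩,
   fun j => if hj : (j : ℕ) < t then h.2 ⟨(j : ℕ), hj⟩
            else c.1 ⟨(j : ℕ) - t, by have := j.isLt; omega⟩)

/-- The probability that, after the prefix history `h`, running `π` (conditioned on the
full history) produces the `k`-step continuation `c`. -/
noncomputable def contProb {S A : Type} [Fintype S] [Fintype A]
    (M : CMP S A) (π : Policy S A) {t k : ℕ} (h : Hist S A t) (c : Contin S A k) : ℝ :=
  ∏ i : Fin k,
    (π.p (t + (i : ℕ))
        (histTake (histAppend h c) (t + (i : ℕ)) (by have := i.isLt; omega))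
        ((histAppend h c).2 ⟨t + (i : ℕ), by have := i.isLt; omega⟩) *
      M.P ((histAppend h c).1 ⟨t + (i : ℕ), by have := i.isLt; omega⟩)
        ((histAppend h c).2 ⟨t + (i : ℕ), by have := i.isLt; omega⟩)
        ((histAppend h c).1 ⟨t + (i : ℕ) + 1, by have := i.isLt; omega⟩))

/-- The expected entropy of the state visitation frequency of the completed trajectory,
when running `π` for `k` further steps after the prefix history `h`. -/
noncomputable def expEntFrom {S A : Type} [Fintype S] [Fintype A] [DecidableEq S]
    (M : CMP S A) (π : Policy S A) {t : ℕ} (k : ℕ) (h : Hist S A t) : ℝ :=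
  ∑ c : Contin S A k, contProb M π h c * entropy (visitFreq (histAppend h c))

/-- A history has positive probability (under some policy) iff its initial state and all
its transitions have positive probability. -/
def Reachable {S A : Type} [Fintype S] [Fintype A] (M : CMP S A) {t : ℕ}
    (h : Hist S A t) : Prop :=
  0 < M.μ (h.1 0) ∧ ∀ i : Fin t, 0 < M.P (h.1 i.castSucc) (h.2 i) (h.1 i.succ)

/-!
Every policy has `d_0 = μ` and satisfies the flow equation
`d_{t+1}(s') = ∑_{s,a} d_t(s, a) P(s' | s, a)`, while a Markovian policy `π'` has
`d_t^{π'}(s, a) = d_t^{π'}(s) π'_t(a | s)`. Taking `π'_t(a | s) = d_t^π(s, a) / d_t^π(s)` gives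
`d_t^π(s) π'_t(a | s) = d_t^π(s, a)` (both sides vanish off the support of `d_t^π`), so if
`d_t^{π'} = d_t^π` then the state-action distributions agree at time `t`, and the flow equation
carries the equality to `t + 1`.
-/

section Histories

variable {S A : Type}

def histSnoc {t : ℕ} (h : Hist S A t) (a : A) (s : S) : Hist S A (t + 1) :=
  (Fin.snoc h.1 s, Fin.snoc h.2 a)

def histSnocEquiv (t : ℕ) : Hist S A t × A × S ≃ Hist S A (t + 1) where
  toFun x := histSnoc x.1 x.2.1 x.2.2
  invFun h := ((Fin.init h.1, Fin.init h.2), h.2 (Fin.last t), h.1 (Fin.last (t + 1)))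
  left_inv := by rintro ⟨⟨_, _⟩, _, _⟩; simp [histSnoc]
  right_inv := by rintro ⟨_, _⟩; simp [histSnoc]

@[simp]
lemma lastState_histSnoc {t : ℕ} (h : Hist S A t) (a : A) (s : S) :
    lastState (histSnoc h a s) = s :=
  Fin.snoc_last (α := fun _ => S) ..

lemma histTake_histSnoc {t : ℕ} (h : Hist S A t) (a : A) (s : S) (i : ℕ) (hi : i ≤ t + 1)
    (hit : i ≤ t) : histTake (histSnoc h a s) i hi = histTake h i hit := by
  ext j
  · exact Fin.snoc_castSucc (α := fun _ => S)
      (i := ⟨j, j.isLt.trans_le (Nat.succ_le_succ hit)⟩) ..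
  · exact Fin.snoc_castSucc (α := fun _ => A) (i := ⟨j, j.isLt.trans_le hit⟩) ..

lemma histTake_self {t : ℕ} (h : Hist S A t) (ht : t ≤ t) : histTake h t ht = h := rfl

end Histories

section Distributions

variable {S A : Type} [Fintype S] [Fintype A]

lemma histProb_histSnoc (M : CMP S A) (π : Policy S A) {t : ℕ} (h : Hist S A t) (a : A)
    (s : S) :
    histProb M π (histSnoc h a s) = histProb M π h * (π.p t h a * M.P (lastState h) a s) := by
  unfold histProb
  rw [Fin.prod_univ_castSucc, mul_assoc]
  congr 2
  · refine Finset.prod_congr rfl fun i _ => ?_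
    simp only [Fin.val_castSucc, histTake_histSnoc h a s i _ i.isLt.le]
    rw [Fin.succ_castSucc]
    simp only [histSnoc, Fin.snoc_castSucc]
  · simp only [Fin.val_last, histTake_histSnoc h a s t _ le_rfl, histTake_self]
    simp [histSnoc, lastState]

lemma histProb_nonneg (M : CMP S A) (π : Policy S A) {t : ℕ} (h : Hist S A t) :
    0 ≤ histProb M π h :=
  mul_nonneg (M.μ_nonneg _) <|
    Finset.prod_nonneg fun _ _ => mul_nonneg (π.nonneg ..) (M.P_nonneg ..)

variable [DecidableEq S]

lemma stateDist_nonneg (M : CMP S A) (π : Policy S A) (t : ℕ) (s : S) :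
    0 ≤ stateDist M π t s :=
  Finset.sum_nonneg fun h _ => by
    split_ifs
    exacts [histProb_nonneg M π h, le_rfl]

lemma stateDist_zero (M : CMP S A) (π : Policy S A) (s : S) : stateDist M π 0 s = M.μ s := by
  unfold stateDist histProb lastState
  rw [Fintype.sum_prod_type, ← (Equiv.funUnique (Fin 1) S).symm.sum_comp]
  simp

noncomputable def stateActionDist (M : CMP S A) (π : Policy S A) (t : ℕ) (s : S) (a : A) : ℝ :=
  ∑ h : Hist S A t, if lastState h = s then histProb M π h * π.p t h a else 0

lemma stateActionDist_nonneg (M : CMP S A) (π : Policy S A) (t : ℕ) (s : S) (a : A) :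
    0 ≤ stateActionDist M π t s a :=
  Finset.sum_nonneg fun h _ => by
    split_ifs
    exacts [mul_nonneg (histProb_nonneg M π h) (π.nonneg ..), le_rfl]

lemma sum_stateActionDist (M : CMP S A) (π : Policy S A) (t : ℕ) (s : S) :
    ∑ a, stateActionDist M π t s a = stateDist M π t s := by
  unfold stateActionDist stateDist
  rw [Finset.sum_comm]
  refine Finset.sum_congr rfl fun h _ => ?_
  rw [Finset.sum_ite_irrel, Finset.sum_const_zero, ← Finset.mul_sum, π.sum_one, mul_one]

lemma stateActionDist_eq_zero_of_stateDist_eq_zero {M : CMP S A} {π : Policy S A} {t : ℕ}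
    {s : S} (hs : stateDist M π t s = 0) (a : A) : stateActionDist M π t s a = 0 := by
  rw [← sum_stateActionDist] at hs
  exact (Finset.sum_eq_zero_iff_of_nonneg fun a _ => stateActionDist_nonneg M π t s a).1 hs a
    (Finset.mem_univ a)

lemma sum_stateActionDist_mul (M : CMP S A) (π : Policy S A) (t : ℕ) (f : S → A → ℝ) :
    ∑ s, ∑ a, stateActionDist M π t s a * f s a =
      ∑ h : Hist S A t, ∑ a, histProb M π h * π.p t h a * f (lastState h) a := by
  simp only [stateActionDist, Finset.sum_mul, ite_mul, zero_mul]
  rw [Finset.sum_comm]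
  simp_rw [Finset.sum_comm (γ := S)]
  rw [Finset.sum_comm]
  simp

lemma stateDist_succ (M : CMP S A) (π : Policy S A) (t : ℕ) (s' : S) :
    stateDist M π (t + 1) s' = ∑ s, ∑ a, stateActionDist M π t s a * M.P s a s' := by
  rw [sum_stateActionDist_mul, stateDist, ← (histSnocEquiv t).sum_comp]
  simp [Fintype.sum_prod_type, histSnocEquiv, histProb_histSnoc, mul_assoc]

lemma stateActionDist_toPolicy (M : CMP S A) (m : MPolicy S A) (t : ℕ) (s : S) (a : A) :
    stateActionDist M m.toPolicy t s a = stateDist M m.toPolicy t s * m.p t s a := by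
  rw [stateActionDist, stateDist, Finset.sum_mul]
  refine Finset.sum_congr rfl fun h _ => ?_
  split_ifs with hs
  · simp [MPolicy.toPolicy, hs]
  · rw [zero_mul]

end Distributions

section MarkovianPolicy

variable {S A : Type} [Fintype S] [Fintype A] [DecidableEq S]

lemma stateDist_toPolicy_eq_of_mul_eq_stateActionDist (M : CMP S A) (π : Policy S A)
    (m : MPolicy S A) (hm : ∀ t s a, stateDist M π t s * m.p t s a = stateActionDist M π t s a)
    (t : ℕ) (s : S) : stateDist M m.toPolicy t s = stateDist M π t s := by
  induction t generalizing s with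
  | zero => rw [stateDist_zero, stateDist_zero]
  | succ t ih => simp_rw [stateDist_succ, stateActionDist_toPolicy, ih, hm]

/-- Off the support of `d_t^π` any action distribution would do; `π`'s first-step distribution
from `s` is one that always exists. -/
noncomputable def MPolicy.ofStateActionDist (M : CMP S A) (π : Policy S A) : MPolicy S A where
  p t s a :=
    if stateDist M π t s = 0 then π.p 0 (fun _ => s, finZeroElim) a
    else stateActionDist M π t s a / stateDist M π t s
  nonneg t s a := by
    split_ifs
    exacts [π.nonneg .., div_nonneg (stateActionDist_nonneg ..) (stateDist_nonneg ..)]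
  sum_one t s := by
    split_ifs with hs
    exacts [π.sum_one .., by rw [← Finset.sum_div, sum_stateActionDist, div_self hs]]

lemma stateDist_mul_ofStateActionDist (M : CMP S A) (π : Policy S A) (t : ℕ) (s : S) (a : A) :
    stateDist M π t s * (MPolicy.ofStateActionDist M π).p t s a = stateActionDist M π t s a := by
  by_cases hs : stateDist M π t s = 0
  · rw [hs, zero_mul, stateActionDist_eq_zero_of_stateDist_eq_zero hs]
  · simp only [MPolicy.ofStateActionDist, if_neg hs, mul_div_cancel₀ _ hs]

end MarkovianPolicy

theorem markovian_policy_matches_all_state_distributions_general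
    {S A : Type} [Fintype S] [Fintype A] [DecidableEq S]
    (M : CMP S A) (π : Policy S A) :
    ∃ π' : MPolicy S A, ∀ (t : ℕ) (s : S),
      stateDist M π'.toPolicy t s = stateDist M π t s :=
  ⟨MPolicy.ofStateActionDist M π, stateDist_toPolicy_eq_of_mul_eq_stateActionDist M π _
    (stateDist_mul_ofStateActionDist M π)⟩

/-- For every CMP and every (possibly non-Markovian, possibly randomized)
policy `π`, there exists a Markovian policy `π'` whose `t`-step state distributions
coincide with those of `π` for every `t` and every state. -/
theorem markovian_policy_matches_all_state_distributions
    {S A : Type} [Fintype S] [Fintype A] [Nonempty S] [Nonempty A] [DecidableEq S]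
    (M : CMP S A) (π : Policy S A) :
    ∃ π' : MPolicy S A, ∀ (t : ℕ) (s : S),
      stateDist M π'.toPolicy t s = stateDist M π t s :=
  markovian_policy_matches_all_state_distributions_general M π
end

section
/- For every controlled Markov process and every horizon T ≥ 1, there exists a deterministic non-Markovian policy π (a deterministic function from histories to actions) such that E(π) equals the supremum of E(π') over all (possibly non-Markovian, possibly randomized) policies π'; that is, deterministic history-dependent policies suffice to maximize the finite-sample entropy objective. -/
open scoped BigOperators

/-!
A randomized history-dependent policy `π` is a mixture of deterministic ones: draw independently,
at every decision point (a time `t < n` together with a history of length `t`), an action from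
`π`'s distribution there, and then follow the drawn actions. A trajectory passes through each
time only once, so it meets pairwise distinct decision points, and the independent draws
reproduce exactly the trajectory law of `π`. Hence the expected value of any function of a
length-`n` trajectory under `π` is a convex combination of its values under the finitely many
deterministic policies, and so is at most the largest of them.
-/

open Finset

theorem sum_prod_mul_prod_comp_of_injective {ι κ A R : Type*} [Fintype ι] [Fintype κ]
    [DecidableEq κ] [Fintype A] [CommSemiring R] {e : ι → κ} (he : Function.Injective e)
    (p : κ → A → R) (hp : ∀ k, ∑ a, p k a = 1) (q : ι → A → R) :
    ∑ g : κ → A, (∏ k, p k (g k)) * ∏ i, q i (g (e i)) = ∏ i, ∑ a, p (e i) a * q i a := by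
  classical
  set F : κ → A → R := fun k a => p k a * ∏ i, if e i = k then q i a else 1
  have hF : ∀ g : κ → A, ∏ k, F k (g k) = (∏ k, p k (g k)) * ∏ i, q i (g (e i)) := by
    intro g
    simp only [F, prod_mul_distrib]
    rw [prod_comm]
    simp
  calc ∑ g : κ → A, (∏ k, p k (g k)) * ∏ i, q i (g (e i))
      = ∑ g : κ → A, ∏ k, F k (g k) := by simp only [hF]
    _ = ∏ k, ∑ a, F k a := (Fintype.prod_sum F).symm
    _ = ∏ i, ∑ a, p (e i) a * q i a := by
      refine (Fintype.prod_of_injective e he _ _ (fun k hk => ?_) (fun i => ?_)).symm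
      · have hne : ∀ i, e i ≠ k := fun i hi => hk ⟨i, hi⟩
        simp [F, hne, hp]
      · simp [F, he.eq_iff]

section Mixture

variable {S A : Type} [Fintype S] [Fintype A]

theorem histProb_eq_prod_policy_mul (M : CMP S A) (π : Policy S A) {t : ℕ} (h : Hist S A t) :
    histProb M π h = (∏ i : Fin t, π.p i (histTake h i i.isLt.le) (h.2 i)) *
      (M.μ (h.1 0) * ∏ i : Fin t, M.P (h.1 i.castSucc) (h.2 i) (h.1 i.succ)) := by
  rw [histProb, prod_mul_distrib]
  ring

abbrev DecisionPoint (S A : Type) (n : ℕ) : Type := Σ t : Fin n, Hist S A t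

/-- Decisions at times `≥ n` never affect a history of length `n`, so they are arbitrary. -/
noncomputable def ruleOfSelector [Nonempty A] {n : ℕ} (g : DecisionPoint S A n → A) :
    ∀ t : ℕ, Hist S A t → A :=
  fun t h => if ht : t < n then g ⟨⟨t, ht⟩, h⟩ else Classical.arbitrary A

noncomputable def Policy.selectorWeight (π : Policy S A) {n : ℕ}
    (g : DecisionPoint S A n → A) : ℝ :=
  ∏ r, π.p r.1 r.2 (g r)

theorem Policy.selectorWeight_nonneg (π : Policy S A) {n : ℕ} (g : DecisionPoint S A n → A) :
    0 ≤ π.selectorWeight g :=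
  prod_nonneg fun r _ => π.nonneg r.1 r.2 (g r)

variable [DecidableEq S] [DecidableEq A]

theorem Policy.sum_selectorWeight (π : Policy S A) (n : ℕ) :
    ∑ g : DecisionPoint S A n → A, π.selectorWeight g = 1 := by
  calc ∑ g : DecisionPoint S A n → A, π.selectorWeight g
      = ∏ r : DecisionPoint S A n, ∑ a, π.p r.1 r.2 a := (Fintype.prod_sum _).symm
    _ = 1 := prod_eq_one fun r _ => π.sum_one r.1 r.2

variable [Nonempty A]

theorem histProb_eq_sum_selectorWeight_mul (M : CMP S A) (π : Policy S A) {n : ℕ}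
    (h : Hist S A n) :
    histProb M π h = ∑ g : DecisionPoint S A n → A,
      π.selectorWeight g * histProb M (detPolicy (ruleOfSelector g)) h := by
  set K := M.μ (h.1 0) * ∏ i : Fin n, M.P (h.1 i.castSucc) (h.2 i) (h.1 i.succ)
  set e : Fin n → DecisionPoint S A n := fun i => ⟨i, histTake h i i.isLt.le⟩
  have he : Function.Injective e := fun i j hij => congrArg Sigma.fst hij
  have hdet : ∀ g : DecisionPoint S A n → A, histProb M (detPolicy (ruleOfSelector g)) h =
      (∏ i, if h.2 i = g (e i) then (1 : ℝ) else 0) * K := by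
    intro g
    rw [histProb_eq_prod_policy_mul]
    congr 1
    refine prod_congr rfl fun i _ => ?_
    simp [detPolicy, ruleOfSelector, e]
  calc histProb M π h
      = (∏ i, ∑ a, π.p (e i).1 (e i).2 a * if h.2 i = a then (1 : ℝ) else 0) * K := by
        rw [histProb_eq_prod_policy_mul]
        congr 1
        refine prod_congr rfl fun i _ => ?_
        simp [e]
    _ = (∑ g : DecisionPoint S A n → A,
          π.selectorWeight g * ∏ i, if h.2 i = g (e i) then (1 : ℝ) else 0) * K := by
        rw [← sum_prod_mul_prod_comp_of_injective he _ fun r => π.sum_one r.1 r.2]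
        rfl
    _ = _ := by simp only [hdet, sum_mul, mul_assoc]

theorem sum_histProb_mul_eq_sum_selectorWeight_mul (M : CMP S A) (π : Policy S A) {n : ℕ}
    (φ : Hist S A n → ℝ) :
    ∑ h, histProb M π h * φ h = ∑ g : DecisionPoint S A n → A,
      π.selectorWeight g * ∑ h, histProb M (detPolicy (ruleOfSelector g)) h * φ h := by
  calc ∑ h, histProb M π h * φ h
      = ∑ h, ∑ g : DecisionPoint S A n → A,
          π.selectorWeight g * (histProb M (detPolicy (ruleOfSelector g)) h * φ h) := by
        refine sum_congr rfl fun h _ => ?_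
        rw [histProb_eq_sum_selectorWeight_mul M π h, sum_mul]
        simp only [mul_assoc]
    _ = _ := by
        rw [sum_comm]
        simp only [mul_sum]

theorem sum_histProb_mul_le_of_forall_selector (M : CMP S A) (π : Policy S A) {n : ℕ}
    (φ : Hist S A n → ℝ) {c : ℝ}
    (hc : ∀ g : DecisionPoint S A n → A,
      ∑ h, histProb M (detPolicy (ruleOfSelector g)) h * φ h ≤ c) :
    ∑ h, histProb M π h * φ h ≤ c := by
  rw [sum_histProb_mul_eq_sum_selectorWeight_mul]
  calc _ ≤ ∑ g : DecisionPoint S A n → A, π.selectorWeight g * c :=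
        sum_le_sum fun g _ => mul_le_mul_of_nonneg_left (hc g) (π.selectorWeight_nonneg g)
    _ = c := by rw [← sum_mul, π.sum_selectorWeight, one_mul]

end Mixture

theorem deterministic_nonMarkovian_sufficient_for_finite_sample_entropy_general
    {S A : Type} [Fintype S] [Fintype A] [Nonempty A]
    [DecidableEq S] [DecidableEq A]
    (M : CMP S A) (T : ℕ) :
    ∃ f : ∀ t : ℕ, Hist S A t → A,
      (∑ h : Hist S A (T - 1), histProb M (detPolicy f) h * entropy (visitFreq h))
        = ⨆ π' : Policy S A,
            ∑ h : Hist S A (T - 1), histProb M π' h * entropy (visitFreq h) := by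
  obtain ⟨g₀, hg₀⟩ := Finite.exists_max fun g : DecisionPoint S A (T - 1) → A =>
    ∑ h, histProb M (detPolicy (ruleOfSelector g)) h * entropy (visitFreq h)
  have hbound : ∀ π' : Policy S A, ∑ h, histProb M π' h * entropy (visitFreq h) ≤
      ∑ h, histProb M (detPolicy (ruleOfSelector g₀)) h * entropy (visitFreq h) :=
    fun π' => sum_histProb_mul_le_of_forall_selector M π' _ hg₀
  have : Nonempty (Policy S A) := ⟨detPolicy (ruleOfSelector g₀)⟩
  exact ⟨ruleOfSelector g₀,
    le_antisymm (le_ciSup ⟨_, Set.forall_mem_range.2 hbound⟩ _) (ciSup_le hbound)⟩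

/-- for every horizon `T ≥ 1` there exists a deterministic non-Markovian
policy (a deterministic function from histories to actions) whose finite-sample entropy
objective attains the supremum over all (possibly randomized) policies. -/
theorem deterministic_nonMarkovian_sufficient_for_finite_sample_entropy
    {S A : Type} [Fintype S] [Fintype A] [Nonempty S] [Nonempty A]
    [DecidableEq S] [DecidableEq A]
    (M : CMP S A) (T : ℕ) (hT : 1 ≤ T) :
    ∃ f : ∀ t : ℕ, Hist S A t → A,
      (∑ h : Hist S A (T - 1), histProb M (detPolicy f) h * entropy (visitFreq h))
        = ⨆ π' : Policy S A,
            ∑ h : Hist S A (T - 1), histProb M π' h * entropy (visitFreq h) :=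
  deterministic_nonMarkovian_sufficient_for_finite_sample_entropy_general M T
end

section
/- Consider a controlled Markov process with a deterministic transition function f : S × A → S, a horizon T ≥ 1, a time t < T, and a prefix trajectory h_t of length t ending in state s_t. Let H* be the maximum of H(d_{h_t ⊕ h'}) over all feasible length-(T−t) continuations h' from s_t (continuations generated by action sequences via f). Assume there is a unique action a* ∈ A such that some continuation whose first action is a* attains H*, and assume some feasible continuation has first action different from a*. Then every Markovian policy π_M for which E_{h'∼p_{T−t}^{π_M}}[H(d_{h_t ⊕ h'})] attains the maximum over Markovian policies and which satisfies π_M(a*|s_t, t) < 1 (i.e. is randomized at (s_t, t)) has strictly positive expected regret-to-go: R_{T−t}(π_M, h_t) > 0. -/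
open scoped BigOperators

/-- In a CMP with deterministic transition function `f`, a continuation `c` after the
prefix `h` is feasible if each of its states is obtained from the previous state and
the chosen action via `f`. -/
def FeasibleCont {S A : Type} (f : S → A → S) {t k : ℕ}
    (h : Hist S A t) (c : Contin S A k) : Prop :=
  ∀ i : Fin k,
    (histAppend h c).1 ⟨t + (i : ℕ) + 1, by have := i.isLt; omega⟩
      = f ((histAppend h c).1 ⟨t + (i : ℕ), by have := i.isLt; omega⟩)
          ((histAppend h c).2 ⟨t + (i : ℕ), by have := i.isLt; omega⟩)

/-!
With deterministic transitions, a Markovian policy induces a distribution on action sequences,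
each of which determines a unique feasible continuation; the expected entropy is therefore an
average of entropies of feasible continuations, all at most `H*`. A policy with
`π(a*|s_t, t) < 1` gives positive weight to an action sequence starting with some `a ≠ a*`, whose
continuation has entropy strictly below `H*` by uniqueness of `a*`, so the average is strictly
below `H*`.
-/

variable {S A : Type}

def detStates (f : S → A → S) : ∀ {k : ℕ}, S → (Fin k → A) → Fin k → S
  | 0, _, _ => Fin.elim0
  | _ + 1, s₀, α => Fin.cons (f s₀ (α 0)) (detStates f (f s₀ (α 0)) (Fin.tail α))

lemma eq_detStates_iff (f : S → A → S) {k : ℕ} (s₀ : S) (α : Fin k → A) (σ : Fin k → S) :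
    σ = detStates f s₀ α ↔
      ∀ i : Fin k, σ i = f ((Fin.cons s₀ σ : Fin (k + 1) → S) i.castSucc) (α i) := by
  induction k generalizing s₀ with
  | zero => exact ⟨fun _ i => i.elim0, fun _ => funext fun i => i.elim0⟩
  | succ k ih =>
    rw [← Fin.cons_self_tail σ, Fin.forall_fin_succ]
    simp only [detStates, Fin.cons_zero, Fin.castSucc_zero, ← Fin.succ_castSucc, Fin.cons_succ,
      Fin.cons_inj]
    exact and_congr_right fun h0 => by rw [ih, h0]; rfl

namespace MPolicy

variable [Fintype A]

def pathWeight (π : MPolicy S A) (f : S → A → S) : ∀ {k : ℕ}, ℕ → S → (Fin k → A) → ℝ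
  | 0, _, _, _ => 1
  | _ + 1, m, s₀, α => π.p m s₀ (α 0) * pathWeight π f (m + 1) (f s₀ (α 0)) (Fin.tail α)

variable (π : MPolicy S A)

lemma exists_pos_ne_of_lt_one {t : ℕ} {s : S} {a₀ : A} (ha₀ : π.p t s a₀ < 1) :
    ∃ a, 0 < π.p t s a ∧ a ≠ a₀ := by
  by_contra! hsupp
  have hsum := π.sum_one t s
  rw [Finset.sum_eq_single a₀ (fun a _ hne => ?_) (by simp)] at hsum
  · linarith
  · exact le_antisymm (not_lt.1 fun hpos => hne (hsupp a hpos)) (π.nonneg t s a)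

variable (f : S → A → S)

lemma pathWeight_eq_prod {k : ℕ} (m : ℕ) (s₀ : S) (α : Fin k → A) :
    π.pathWeight f m s₀ α =
      ∏ i : Fin k, π.p (m + i) ((Fin.cons s₀ (detStates f s₀ α) : Fin (k + 1) → S) i.castSucc)
        (α i) := by
  induction k generalizing m s₀ with
  | zero => simp [pathWeight]
  | succ k ih =>
    rw [Fin.prod_univ_succ, pathWeight, ih]
    simp only [Fin.castSucc_zero, Fin.cons_zero, Fin.val_zero, Nat.add_zero]
    refine congrArg _ (Finset.prod_congr rfl fun i _ => ?_)
    rw [← Fin.succ_castSucc, Fin.cons_succ, Fin.val_succ, add_right_comm]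
    rfl

lemma pathWeight_cons {k : ℕ} (m : ℕ) (s₀ : S) (a : A) (β : Fin k → A) :
    π.pathWeight f m s₀ (Fin.cons a β : Fin (k + 1) → A) =
      π.p m s₀ a * π.pathWeight f (m + 1) (f s₀ a) β := by
  simp [pathWeight]

lemma pathWeight_nonneg {k : ℕ} (m : ℕ) (s₀ : S) (α : Fin k → A) :
    0 ≤ π.pathWeight f m s₀ α := by
  induction k generalizing m s₀ with
  | zero => exact zero_le_one
  | succ k ih => exact mul_nonneg (π.nonneg _ _ _) (ih _ _ _)

lemma sum_pathWeight (k m : ℕ) (s₀ : S) : ∑ α : Fin k → A, π.pathWeight f m s₀ α = 1 := by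
  induction k generalizing m s₀ with
  | zero => simp [pathWeight]
  | succ k ih =>
    rw [← (Fin.consEquiv fun _ => A).sum_comp, Fintype.sum_prod_type, ← π.sum_one m s₀]
    refine Finset.sum_congr rfl fun a _ => ?_
    change ∑ β, π.pathWeight f m s₀ (Fin.cons a β : Fin (k + 1) → A) = _
    simp only [pathWeight_cons, ← Finset.mul_sum, ih, mul_one]

lemma exists_pathWeight_pos (k m : ℕ) (s₀ : S) {a : A} (ha : 0 < π.p m s₀ a) :
    ∃ α : Fin (k + 1) → A, α 0 = a ∧ 0 < π.pathWeight f m s₀ α := by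
  obtain ⟨β, -, hβ⟩ := Finset.exists_ne_zero_of_sum_ne_zero
    ((π.sum_pathWeight f k (m + 1) (f s₀ a)).symm ▸ one_ne_zero)
  refine ⟨Fin.cons a β, rfl, ?_⟩
  rw [pathWeight_cons]
  exact mul_pos ha ((π.pathWeight_nonneg f _ _ β).lt_of_ne' hβ)

end MPolicy

lemma lastState_histTake {n : ℕ} (h : Hist S A n) (m : ℕ) (hm : m ≤ n) :
    lastState (histTake h m hm) = h.1 ⟨m, by omega⟩ :=
  rfl

section HistAppend

variable {t k : ℕ} (h : Hist S A t) (c : Contin S A k) (i : Fin k)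

lemma histAppend_fst_add (hi : t + i < t + k + 1) :
    (histAppend h c).1 ⟨t + i, hi⟩ = (Fin.cons (lastState h) c.2 : Fin (k + 1) → S) i.castSucc := by
  obtain ⟨_ | j, hj⟩ := i
  · exact dif_pos le_rfl
  · rw [show (⟨j + 1, hj⟩ : Fin k).castSucc = (⟨j, by omega⟩ : Fin k).succ from rfl, Fin.cons_succ]
    exact (dif_neg (by simp)).trans (congrArg c.2 (Fin.ext (by simp)))

lemma histAppend_fst_add_one (hi : t + i + 1 < t + k + 1) :
    (histAppend h c).1 ⟨t + i + 1, hi⟩ = c.2 i :=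
  (dif_neg (by simp)).trans (congrArg c.2 (Fin.ext (by simp; omega)))

lemma histAppend_snd_add (hi : t + i < t + k) : (histAppend h c).2 ⟨t + i, hi⟩ = c.1 i :=
  (dif_neg (by simp)).trans (congrArg c.1 (Fin.ext (by simp)))

end HistAppend

lemma feasibleCont_iff (f : S → A → S) {t k : ℕ} (h : Hist S A t) (c : Contin S A k) :
    FeasibleCont f h c ↔ c.2 = detStates f (lastState h) c.1 := by
  rw [eq_detStates_iff]
  exact forall_congr' fun i => by
    rw [histAppend_fst_add_one, histAppend_fst_add, histAppend_snd_add]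

section Deterministic

variable [Fintype S] [Fintype A] [DecidableEq S] {M : CMP S A} {f : S → A → S}

lemma contProb_toPolicy_of_det (hdet : ∀ s a s', M.P s a s' = if s' = f s a then 1 else 0)
    (π : MPolicy S A) {t k : ℕ} (h : Hist S A t) (c : Contin S A k) :
    contProb M π.toPolicy h c =
      if c.2 = detStates f (lastState h) c.1 then π.pathWeight f t (lastState h) c.1 else 0 := by
  have hfactor : contProb M π.toPolicy h c =
      (∏ i : Fin k,
          π.p (t + i) ((Fin.cons (lastState h) c.2 : Fin (k + 1) → S) i.castSucc) (c.1 i)) *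
        ∏ i : Fin k,
          if c.2 i = f ((Fin.cons (lastState h) c.2 : Fin (k + 1) → S) i.castSucc) (c.1 i)
          then 1 else 0 := by
    rw [← Finset.prod_mul_distrib]
    refine Finset.prod_congr rfl fun i _ => ?_
    simp only [MPolicy.toPolicy, lastState_histTake, hdet, histAppend_fst_add_one,
      histAppend_fst_add, histAppend_snd_add]
  simp only [hfactor, Fintype.prod_boole, ← eq_detStates_iff]
  split_ifs with hc
  · rw [mul_one, π.pathWeight_eq_prod, ← hc]
  · rw [mul_zero]

lemma sum_contProb_toPolicy_mul_of_det
    (hdet : ∀ s a s', M.P s a s' = if s' = f s a then 1 else 0)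
    (π : MPolicy S A) {t k : ℕ} (h : Hist S A t) (F : Contin S A k → ℝ) :
    ∑ c, contProb M π.toPolicy h c * F c =
      ∑ α, π.pathWeight f t (lastState h) α * F (α, detStates f (lastState h) α) := by
  rw [Fintype.sum_prod_type]
  refine Finset.sum_congr rfl fun α _ => ?_
  simp only [contProb_toPolicy_of_det hdet, ite_mul, zero_mul, Finset.sum_ite_eq',
    Finset.mem_univ, if_true]

lemma sum_contProb_toPolicy_mul_lt_of_det
    (hdet : ∀ s a s', M.P s a s' = if s' = f s a then 1 else 0)
    (π : MPolicy S A) {t k : ℕ} (hk : 0 < k) (h : Hist S A t) {F : Contin S A k → ℝ} {H : ℝ}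
    {a₀ : A} (hle : ∀ c, FeasibleCont f h c → F c ≤ H)
    (hlt : ∀ c, FeasibleCont f h c → c.1 ⟨0, hk⟩ ≠ a₀ → F c < H)
    (hπ : π.p t (lastState h) a₀ < 1) :
    ∑ c, contProb M π.toPolicy h c * F c < H := by
  obtain ⟨k, rfl⟩ : ∃ k', k = k' + 1 := ⟨k - 1, by omega⟩
  obtain ⟨a, ha, hne⟩ := π.exists_pos_ne_of_lt_one hπ
  obtain ⟨α, rfl, hα⟩ := π.exists_pathWeight_pos f k t (lastState h) ha
  have hfeas (β : Fin (k + 1) → A) : FeasibleCont f h (β, detStates f (lastState h) β) :=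
    (feasibleCont_iff f h _).2 rfl
  calc ∑ c, contProb M π.toPolicy h c * F c
      = ∑ β, π.pathWeight f t (lastState h) β * F (β, detStates f (lastState h) β) :=
        sum_contProb_toPolicy_mul_of_det hdet π h F
    _ < ∑ β, π.pathWeight f t (lastState h) β * H :=
        Finset.sum_lt_sum
          (fun β _ => mul_le_mul_of_nonneg_left (hle _ (hfeas β)) (π.pathWeight_nonneg f _ _ β))
          ⟨α, Finset.mem_univ _, mul_lt_mul_of_pos_left (hlt _ (hfeas α) hne) hα⟩
    _ = H := by rw [← Finset.sum_mul, π.sum_pathWeight, one_mul]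

end Deterministic

/-- in a CMP with deterministic transitions `f`, if `H*` is the maximal
final entropy over feasible continuations of the prefix `h_t`, there is a unique
optimal first action `a*`, and some feasible continuation starts with a different
action, then every Markovian policy that maximizes the expected final entropy among
Markovian policies and is randomized at `(s_t, t)` (i.e. `π_M(a*|s_t,t) < 1`) suffers
strictly positive expected regret-to-go. -/
theorem randomized_optimal_markovian_has_positive_regret
    {S A : Type} [Fintype S] [Fintype A]
    [DecidableEq S]
    (M : CMP S A) (f : S → A → S)
    (hdet : ∀ s a s', M.P s a s' = if s' = f s a then 1 else 0)
    (T t : ℕ) (ht : t + 1 < T)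
    (h : Hist S A t) (Hstar : ℝ)
    (hHstar : IsGreatest
      ((fun c : Contin S A (T - 1 - t) => entropy (visitFreq (histAppend h c))) ''
        {c | FeasibleCont f h c}) Hstar)
    (astar : A)
    (huniq : ∀ a : A, (∃ c : Contin S A (T - 1 - t), FeasibleCont f h c
        ∧ c.1 ⟨0, by omega⟩ = a ∧ entropy (visitFreq (histAppend h c)) = Hstar)
        → a = astar)
    (πM : MPolicy S A)
    (hrand : πM.p t (lastState h) astar < 1) :
    0 < Hstar - expEntFrom M πM.toPolicy (T - 1 - t) h := by
  have hk : 0 < T - 1 - t := by omega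
  have hle (c) (hc : FeasibleCont f h c) : entropy (visitFreq (histAppend h c)) ≤ Hstar :=
    hHstar.2 ⟨c, hc, rfl⟩
  rw [sub_pos, expEntFrom]
  refine sum_contProb_toPolicy_mul_lt_of_det hdet πM hk h hle (fun c hc hne => ?_) hrand
  exact (hle c hc).lt_of_ne fun heq => hne (huniq _ ⟨c, hc, rfl, heq⟩)
end

section
/- Let S be a finite nonempty set, let c : S → ℕ be a count vector with total Σ_{s∈S} c(s) = t > 0, and let n ≥ 1. Among all count vectors m : S → ℕ with Σ_{s∈S} m(s) = n, the Shannon entropy of the normalized vector q_m(s) = (c(s) + m(s))/(t + n) is minimized by placing all n additional counts on a state with maximal current count: for any s* ∈ argmax_{s∈S} c(s) and m* = n·1_{s*} (i.e. m*(s*) = n and m*(s) = 0 otherwise), H(q_{m*}) ≤ H(q_m) for every m with Σ_s m(s) = n. Consequently, in the worst-case CMP analysis, the continuation that repeatedly visits a state maximizing the current visitation frequency d_{h_t} attains the minimum final entropy H_* = min_{h ∈ H_{T−t}} H(d_{h_t ⊕ h}) over all state-sequence continuations. -/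
open scoped BigOperators

/-!
With `N = t + n` and `φ x = x log x`, the entropy of `k / N` for counts `k` of total `N` is
`log N - (∑ s, φ (k s)) / N`, so the least entropy belongs to the largest `∑ s, φ (c s + m s)`.
Since `φ` is convex, its increment over a step of length `d` grows with the base point. Hence the
gain `φ (c s + m s) - φ (c s)` of each state is at most the gain of stacking the same `m s` onto
`c sstar` above the counts already stacked there, and these bounds telescope to
`φ (c sstar + n) - φ (c sstar)`, the gain of putting all `n` counts on `sstar`.
-/

open Finset Real

section Convex

variable {𝕜 : Type*} [Field 𝕜] [LinearOrder 𝕜] [IsStrictOrderedRing 𝕜] {s : Set 𝕜} {f : 𝕜 → 𝕜}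

theorem ConvexOn.map_add_sub_map_le (hf : ConvexOn 𝕜 s f) {x y d : 𝕜} (hx : x ∈ s)
    (hyd : y + d ∈ s) (hxy : x ≤ y) (hd : 0 ≤ d) :
    f (x + d) - f x ≤ f (y + d) - f y := by
  rcases hd.eq_or_lt with rfl | hd
  · simp
  have hD : 0 < y - x + d := by linarith
  have hab : (y - x) / (y - x + d) + d / (y - x + d) = 1 := by field_simp
  have h₁ := hf.2 hx hyd (div_nonneg (sub_nonneg.2 hxy) hD.le) (div_nonneg hd.le hD.le) hab
  have h₂ := hf.2 hx hyd (div_nonneg hd.le hD.le) (div_nonneg (sub_nonneg.2 hxy) hD.le)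
    ((add_comm _ _).trans hab)
  have e₁ : ((y - x) / (y - x + d)) • x + (d / (y - x + d)) • (y + d) = x + d := by
    simp only [smul_eq_mul]; field_simp; ring
  have e₂ : (d / (y - x + d)) • x + ((y - x) / (y - x + d)) • (y + d) = y := by
    simp only [smul_eq_mul]; field_simp; ring
  rw [e₁, smul_eq_mul, smul_eq_mul] at h₁
  rw [e₂, smul_eq_mul, smul_eq_mul] at h₂
  linear_combination h₁ + h₂ + (f x + f (y + d)) * hab

theorem ConvexOn.sum_map_add_sub_map_le {ι : Type*} (hf : ConvexOn 𝕜 (Set.Ici 0) f)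
    (A : Finset ι) {c m : ι → 𝕜} {b : 𝕜} (hc : ∀ i ∈ A, 0 ≤ c i) (hm : ∀ i ∈ A, 0 ≤ m i)
    (hcb : ∀ i ∈ A, c i ≤ b) :
    ∑ i ∈ A, (f (c i + m i) - f (c i)) ≤ f (b + ∑ i ∈ A, m i) - f b := by
  classical
  induction A using Finset.induction_on with
  | empty => simp
  | insert a A ha ih =>
    simp only [mem_insert, forall_eq_or_imp] at hc hm hcb
    have hM : 0 ≤ ∑ i ∈ A, m i := sum_nonneg hm.2
    have step := hf.map_add_sub_map_le (x := c a) (y := b + ∑ i ∈ A, m i) (d := m a) hc.1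
      (Set.mem_Ici.2 (by linarith [hc.1, hcb.1, hm.1])) (by linarith [hcb.1]) hm.1
    rw [sum_insert ha, sum_insert ha, add_comm (m a), ← add_assoc]
    linarith [ih hc.2 hm.2 hcb.2]

end Convex

section Entropy

variable {S : Type} [Fintype S]

theorem entropy_eq_sum_negMulLog (d : S → ℝ) : entropy d = ∑ s, negMulLog (d s) := by
  simp [entropy, negMulLog_eq_neg, sum_neg_distrib]

theorem entropy_div_sum (k : S → ℝ) :
    entropy (fun s => k s / ∑ s, k s) = log (∑ s, k s) + (∑ s, negMulLog (k s)) / ∑ s, k s := by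
  simp_rw [entropy_eq_sum_negMulLog, div_eq_mul_inv, negMulLog_mul, sum_add_distrib, ← mul_sum,
    ← sum_mul]
  rcases eq_or_ne (∑ s, k s) 0 with hN | hN
  · simp [hN]
  · rw [negMulLog, log_inv]
    field_simp
    ring

theorem entropy_div_le_entropy_div {k l : S → ℝ} {N : ℝ} (hk : ∑ s, k s = N)
    (hl : ∑ s, l s = N) (hN : 0 ≤ N) (h : ∑ s, negMulLog (k s) ≤ ∑ s, negMulLog (l s)) :
    entropy (fun s => k s / N) ≤ entropy (fun s => l s / N) := by
  rw [← hk, entropy_div_sum, hk, ← hl, entropy_div_sum, hl]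
  gcongr

theorem entropy_add_mass_at_max_le [DecidableEq S] {c m : S → ℝ} {n : ℝ} {sstar : S}
    (hc : ∀ s, 0 ≤ c s) (hm : ∀ s, 0 ≤ m s) (hmax : ∀ s, c s ≤ c sstar) (hmn : ∑ s, m s = n) :
    entropy (fun s => (c s + if s = sstar then n else 0) / (∑ s, c s + n))
      ≤ entropy (fun s => (c s + m s) / (∑ s, c s + n)) := by
  have hspread := convexOn_mul_log.sum_map_add_sub_map_le univ (fun s _ => hc s)
    (fun s _ => hm s) (fun s _ => hmax s)
  have hconcentrated : ∑ s, ((c s + if s = sstar then n else 0)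
      * log (c s + if s = sstar then n else 0) - c s * log (c s))
      = (c sstar + n) * log (c sstar + n) - c sstar * log (c sstar) := by
    rw [sum_eq_single sstar (fun s _ hs => by simp [hs]) (by simp)]
    simp
  rw [hmn] at hspread
  rw [sum_sub_distrib] at hspread hconcentrated
  apply entropy_div_le_entropy_div (by simp [sum_add_distrib]) (by rw [sum_add_distrib, hmn])
    (add_nonneg (sum_nonneg fun s _ => hc s) (hmn ▸ sum_nonneg fun s _ => hm s))
  simp only [negMulLog_eq_neg, sum_neg_distrib, neg_le_neg_iff]
  linarith

theorem entropy_natCast_add_mass_at_max_le [DecidableEq S] {c m : S → ℕ} {n : ℕ} {sstar : S}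
    (hmax : ∀ s, c s ≤ c sstar) (hmn : ∑ s, m s = n) :
    entropy (fun s => ((c s + if s = sstar then n else 0 : ℕ) : ℝ) / ((∑ s, c s + n : ℕ) : ℝ))
      ≤ entropy (fun s => ((c s + m s : ℕ) : ℝ) / ((∑ s, c s + n : ℕ) : ℝ)) := by
  push_cast
  exact entropy_add_mass_at_max_le (fun s => (c s).cast_nonneg) (fun s => (m s).cast_nonneg)
    (fun s => Nat.cast_le.2 (hmax s)) (by exact_mod_cast hmn)

end Entropy

theorem entropy_minimized_by_mass_on_argmax_general
    {S : Type} [Fintype S] [DecidableEq S]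
    (c : S → ℕ) (t n : ℕ) (hc : ∑ s, c s = t)
    (sstar : S) (hsstar : ∀ s, c s ≤ c sstar) :
    (∀ m : S → ℕ, ∑ s, m s = n →
      entropy (fun s => ((c s + if s = sstar then n else 0 : ℕ) : ℝ) / ((t + n : ℕ) : ℝ))
        ≤ entropy (fun s => ((c s + m s : ℕ) : ℝ) / ((t + n : ℕ) : ℝ)))
    ∧ (∀ σ : Fin t → S,
        (∀ s, (Finset.univ.filter (fun i : Fin t => σ i = s)).card = c s) →
        ∀ τ : Fin n → S,
          entropy (fun s => ((c s
              + (Finset.univ.filter (fun _ : Fin n => sstar = s)).card : ℕ) : ℝ)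
            / ((t + n : ℕ) : ℝ))
          ≤ entropy (fun s => ((c s
              + (Finset.univ.filter (fun j : Fin n => τ j = s)).card : ℕ) : ℝ)
            / ((t + n : ℕ) : ℝ))) := by
  subst hc
  refine ⟨fun m hm => entropy_natCast_add_mass_at_max_le hsstar hm, fun _ _ τ => ?_⟩
  have hconst (s : S) :
      (univ.filter fun _ : Fin n => sstar = s).card = if s = sstar then n else 0 := by
    rcases eq_or_ne s sstar with rfl | h
    · simp
    · simp [h, h.symm]
  have hfibers : ∑ s, (univ.filter fun j : Fin n => τ j = s).card = n := by
    simpa using (card_eq_sum_card_fiberwise (s := univ) (t := univ) fun j _ => mem_univ (τ j)).symm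
  simpa only [hconst] using entropy_natCast_add_mass_at_max_le hsstar hfibers

/-- among all count vectors `m` with total `n`, the entropy of the
normalized vector `(c + m)/(t + n)` is minimized by placing all `n` additional counts on
a state `s*` of maximal current count. Consequently, for a prefix state sequence `σ`
with counts `c`, the continuation that repeatedly visits `s*` attains the minimum final
entropy over all state-sequence continuations. -/
theorem entropy_minimized_by_mass_on_argmax
    {S : Type} [Fintype S] [Nonempty S] [DecidableEq S]
    (c : S → ℕ) (t n : ℕ) (hc : ∑ s, c s = t) (ht : 0 < t) (hn : 1 ≤ n)
    (sstar : S) (hsstar : ∀ s, c s ≤ c sstar) :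
    (∀ m : S → ℕ, ∑ s, m s = n →
      entropy (fun s => ((c s + if s = sstar then n else 0 : ℕ) : ℝ) / ((t + n : ℕ) : ℝ))
        ≤ entropy (fun s => ((c s + m s : ℕ) : ℝ) / ((t + n : ℕ) : ℝ)))
    ∧ (∀ σ : Fin t → S,
        (∀ s, (Finset.univ.filter (fun i : Fin t => σ i = s)).card = c s) →
        ∀ τ : Fin n → S,
          entropy (fun s => ((c s
              + (Finset.univ.filter (fun _ : Fin n => sstar = s)).card : ℕ) : ℝ)
            / ((t + n : ℕ) : ℝ))
          ≤ entropy (fun s => ((c s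
              + (Finset.univ.filter (fun j : Fin n => τ j = s)).card : ℕ) : ℝ)
            / ((t + n : ℕ) : ℝ))) :=
  entropy_minimized_by_mass_on_argmax_general c t n hc sstar hsstar
end
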